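/- Worst-case CVaR robust positively invariant set (Theorem 4): consider x_{t+1} = A x_t + D v_t + E w_t with spectral norm ‖A‖ < 1, Σ_w positive semidefinite, and inputs satisfying ‖v_t‖ ≤ d for all t. If r > 0 satisfies r² ≥ (1/(1 − ‖A‖)²)·( ‖D‖·d + √((1/ε)·Tr(Σ_w Eᵀ E)) )², then for every x ∈ ℝ^{n_x} with ‖x‖² ≤ r², every k ≥ 1, and every input sequence v₀, …, v_{k−1} with ‖v_τ‖ ≤ d: sup_{P ∈ M_k} CVaR_ε^P[ ‖A^k x + G_k v̄_k + H_k w̄_k‖² − r² ] ≤ 0. -/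

import Mathlib

open MeasureTheory Matrix Kronecker

/-- Spectral norm (largest singular value) of a real matrix, as the operator norm of the
induced map between Euclidean spaces. -/
noncomputable def specNorm {m n : Type*} [Fintype m] [Fintype n] [DecidableEq n]
    (A : Matrix m n ℝ) : ℝ :=
  ‖LinearMap.toContinuousLinearMap (Matrix.toEuclideanLin A)‖

/-- Conditional value-at-risk at level `ε` of the loss `L` under the measure `P`:
`CVaR_ε^P[L] = inf_β ( β + (1/ε) E_P[max (L ξ - β) 0] )`. -/
noncomputable def CVaR {ι : Type*} [Fintype ι] (ε : ℝ)
    (P : Measure (EuclideanSpace ℝ ι)) (L : EuclideanSpace ℝ ι → ℝ) : ℝ :=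
  ⨅ β : ℝ, (β + ε⁻¹ * ∫ ξ, max (L ξ - β) 0 ∂P)

/-- The set `M(S)` of Borel probability measures with zero mean and covariance `S`. -/
def MomentSet {ι : Type*} [Fintype ι] (S : Matrix ι ι ℝ) :
    Set (Measure (EuclideanSpace ℝ ι)) :=
  {P | IsProbabilityMeasure P ∧
       (∀ i, Integrable (fun ξ => ξ i) P) ∧
       (∀ i, ∫ ξ, ξ i ∂P = 0) ∧
       (∀ i j, Integrable (fun ξ => ξ i * ξ j) P) ∧
       (∀ i j, ∫ ξ, ξ i * ξ j ∂P = S i j)}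

/-- Worst-case CVaR over the moment set `M(S)`. -/
noncomputable def wcCVaR {ι : Type*} [Fintype ι] (ε : ℝ) (S : Matrix ι ι ℝ)
    (L : EuclideanSpace ℝ ι → ℝ) : ℝ :=
  ⨆ P : MomentSet S, CVaR ε (P : Measure (EuclideanSpace ℝ ι)) L

/-- The block matrix `H_t = [A^(t-1) E, A^(t-2) E, ..., E]`, viewed as a matrix acting on the
stacked disturbance vector `w̄_t = (w_0, ..., w_(t-1))` (indexed by `Fin t × Fin nw`),
so that `H_t w̄_t = Σ_k A^(t-1-k) E w_k`. -/
noncomputable def Hmat {nx nw : ℕ} (A : Matrix (Fin nx) (Fin nx) ℝ)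
    (E : Matrix (Fin nx) (Fin nw) ℝ) (t : ℕ) :
    Matrix (Fin nx) (Fin t × Fin nw) ℝ :=
  Matrix.of fun i p => (A ^ (t - 1 - (p.1 : ℕ)) * E) i p.2

/-!
Write the state after `k` steps as `c + H w̄` with `c = A^k x + G_k v̄` deterministic. For every
`a > 0`, AM–GM gives `‖c + f‖² ≤ ‖c‖² + a + (1 + ‖c‖²/a) ‖f‖²`, so the CVaR threshold
`β = ‖c‖² + a - r²` yields, letting `a → ‖c‖ W`,
`CVaR_ε[‖c + H w̄‖² - r²] ≤ (‖c‖ + W)² - r²` with `W = √(E‖H w̄‖² / ε)`.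
The second moment `E‖H w̄‖² = tr(H (I ⊗ Σ_w) Hᵀ)` is fixed by the covariance, and
`tr(M B Mᵀ) ≤ ‖M‖² tr B` for `B ⪰ 0` bounds it by `S² tr(Σ_w EᵀE)`, where
`S = Σ_{j<k} ‖A‖^j = (1 - ‖A‖^k)/(1 - ‖A‖)`. Since also `‖c‖ ≤ ‖A‖^k r + S ‖D‖ d`, the
hypothesis on `r` gives `‖c‖ + W ≤ ‖A‖^k r + S (1 - ‖A‖) r = r`.
-/

section SpecNorm

variable {l m n : Type*} [Fintype l] [Fintype m] [Fintype n] [DecidableEq n]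

theorem specNorm_nonneg (A : Matrix m n ℝ) : 0 ≤ specNorm A := norm_nonneg _

theorem norm_toEuclideanLin_le (A : Matrix m n ℝ) (x : EuclideanSpace ℝ n) :
    ‖toEuclideanLin A x‖ ≤ specNorm A * ‖x‖ :=
  (toEuclideanLin A).toContinuousLinearMap.le_opNorm x

open scoped Matrix.Norms.L2Operator in
theorem specNorm_mul_le [DecidableEq l] (A : Matrix m n ℝ) (B : Matrix n l ℝ) :
    specNorm (A * B) ≤ specNorm A * specNorm B :=
  Matrix.l2_opNorm_mul A B

theorem specNorm_one_le : specNorm (1 : Matrix n n ℝ) ≤ 1 := by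
  refine ContinuousLinearMap.opNorm_le_bound _ zero_le_one fun x => ?_
  simp

theorem specNorm_pow_le (A : Matrix n n ℝ) (j : ℕ) : specNorm (A ^ j) ≤ specNorm A ^ j := by
  induction j with
  | zero => simpa using specNorm_one_le
  | succ j ih =>
    rw [pow_succ, pow_succ]
    exact (specNorm_mul_le _ _).trans
      (mul_le_mul_of_nonneg_right ih (specNorm_nonneg A))

end SpecNorm

section Trace

variable {m n : Type*} [Fintype m] [Fintype n]

theorem trace_mul_transpose_self (X : Matrix m n ℝ) :
    trace (X * Xᵀ) = ∑ i, ∑ j, X i j ^ 2 := by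
  simp [trace, mul_apply, sq]

theorem trace_mul_mul_transpose_le [DecidableEq n] (M : Matrix m n ℝ) {B : Matrix n n ℝ}
    (hB : B.PosSemidef) : trace (M * B * Mᵀ) ≤ specNorm M ^ 2 * trace B := by
  open scoped MatrixOrder Matrix.Norms.L2Operator in
  obtain ⟨C, rfl⟩ := CStarAlgebra.nonneg_iff_eq_star_mul_self.mp hB.nonneg
  let c : n → EuclideanSpace ℝ n := fun j => WithLp.toLp 2 (C j)
  have hM : trace (M * (star C * C) * Mᵀ) = ∑ j, ‖toEuclideanLin M (c j)‖ ^ 2 := by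
    rw [show M * (star C * C) * Mᵀ = (M * Cᵀ) * (M * Cᵀ)ᵀ by
      simp [star_eq_conjTranspose, Matrix.mul_assoc, transpose_mul]]
    rw [trace_mul_transpose_self, Finset.sum_comm]
    simp [c, EuclideanSpace.norm_sq_eq, mul_apply, mulVec, dotProduct]
  have hB : trace (star C * C) = ∑ j, ‖c j‖ ^ 2 := by
    rw [star_eq_conjTranspose, conjTranspose_eq_transpose_of_trivial, trace_mul_comm,
      trace_mul_transpose_self]
    simp [c, EuclideanSpace.norm_sq_eq]
  rw [hM, hB, Finset.mul_sum]
  gcongr with j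
  rw [← mul_pow]
  exact pow_le_pow_left₀ (norm_nonneg _) (norm_toEuclideanLin_le M (c j)) 2

end Trace

namespace MomentSet

variable {ι κ : Type*} [Fintype ι] [Fintype κ] {S : Matrix ι ι ℝ}
  {P : Measure (EuclideanSpace ℝ ι)}

theorem memLp_id (hP : P ∈ MomentSet S) : MemLp id 2 P := by
  refine (memLp_two_iff_integrable_sq_norm aestronglyMeasurable_id).mpr ?_
  simp_rw [id, EuclideanSpace.norm_sq_eq, Real.norm_eq_abs, sq_abs, sq]
  exact integrable_finsetSum _ fun i _ => hP.2.2.2.1 i i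

theorem memLp_toEuclideanLin [DecidableEq ι] (hP : P ∈ MomentSet S) (H : Matrix κ ι ℝ) :
    MemLp (toEuclideanLin H) 2 P :=
  (toEuclideanLin H).toContinuousLinearMap.comp_memLp' (memLp_id hP)

theorem integral_norm_toEuclideanLin_sq [DecidableEq ι] (hP : P ∈ MomentSet S)
    (H : Matrix κ ι ℝ) : ∫ w, ‖toEuclideanLin H w‖ ^ 2 ∂P = trace (H * S * Hᵀ) := by
  have hint : ∀ i p q, Integrable (fun w : EuclideanSpace ℝ ι => H i p * H i q * (w p * w q)) P :=
    fun i p q => (hP.2.2.2.1 p q).const_mul _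
  have hexpand : (fun w : EuclideanSpace ℝ ι => ‖toEuclideanLin H w‖ ^ 2)
      = fun w => ∑ i, ∑ p, ∑ q, H i p * H i q * (w p * w q) := by
    ext w
    rw [EuclideanSpace.norm_sq_eq]
    simp only [Real.norm_eq_abs, toLpLin_apply, mulVec, dotProduct, sq,
      abs_mul_abs_self, Finset.sum_mul_sum]
    exact Finset.sum_congr rfl fun i _ => Finset.sum_congr rfl fun p _ =>
      Finset.sum_congr rfl fun q _ => by ring
  rw [hexpand, integral_finsetSum _ fun i _ => integrable_finsetSum _ fun p _ =>
    integrable_finsetSum _ fun q _ => hint i p q]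
  simp only [trace, diag, mul_apply, transpose_apply, Finset.sum_mul]
  refine Finset.sum_congr rfl fun i _ => ?_
  rw [integral_finsetSum _ fun p _ => integrable_finsetSum _ fun q _ => hint i p q,
    Finset.sum_comm]
  refine Finset.sum_congr rfl fun p _ => ?_
  rw [integral_finsetSum _ fun q _ => hint i p q]
  refine Finset.sum_congr rfl fun q _ => ?_
  rw [integral_const_mul, hP.2.2.2.2]
  ring

end MomentSet

theorem norm_add_sq_le {E : Type*} [SeminormedAddCommGroup E] (c f : E) {a : ℝ} (ha : 0 < a) :
    ‖c + f‖ ^ 2 ≤ ‖c‖ ^ 2 + a + (1 + ‖c‖ ^ 2 / a) * ‖f‖ ^ 2 := by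
  have hamgm : 2 * ‖c‖ * ‖f‖ ≤ a + ‖c‖ ^ 2 / a * ‖f‖ ^ 2 := by
    rw [div_mul_eq_mul_div, ← sub_nonneg]
    have : a + ‖c‖ ^ 2 * ‖f‖ ^ 2 / a - 2 * ‖c‖ * ‖f‖ = (a - ‖c‖ * ‖f‖) ^ 2 / a := by
      field_simp
      ring
    rw [this]
    positivity
  nlinarith [norm_add_le c f, norm_nonneg (c + f), norm_nonneg c, norm_nonneg f]

section CVaR

variable {ι : Type*} [Fintype ι] {ε : ℝ} {P : Measure (EuclideanSpace ℝ ι)}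
  [IsProbabilityMeasure P] {L : EuclideanSpace ℝ ι → ℝ}

theorem CVaR_le (hε : ε ∈ Set.Ioc 0 1) (hL : Integrable L P) (β : ℝ) :
    CVaR ε P L ≤ β + ε⁻¹ * ∫ ξ, max (L ξ - β) 0 ∂P := by
  refine ciInf_le ⟨∫ ξ, L ξ ∂P, ?_⟩ β
  rintro _ ⟨b, rfl⟩
  have hpos : Integrable (fun ξ => max (L ξ - b) 0) P := (hL.sub (integrable_const b)).pos_part
  -- for `ε ≤ 1` the objective is bounded below by the mean of `L`
  have hone : ∫ ξ, max (L ξ - b) 0 ∂P ≤ ε⁻¹ * ∫ ξ, max (L ξ - b) 0 ∂P :=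
    le_mul_of_one_le_left (integral_nonneg fun _ => le_max_right _ _)
      ((one_le_inv₀ hε.1).mpr hε.2)
  have hmean : ∫ ξ, L ξ ∂P - b ≤ ∫ ξ, max (L ξ - b) 0 ∂P := by
    rw [show ∫ ξ, L ξ ∂P - b = ∫ ξ, (L ξ - b) ∂P by
      simp [integral_sub hL (integrable_const b)]]
    exact integral_mono (hL.sub (integrable_const b)) hpos fun _ => le_max_left _ _
  linarith

theorem CVaR_norm_add_sq_sub_sq_le {E : Type*} [NormedAddCommGroup E] (hε : ε ∈ Set.Ioc 0 1)
    (c : E) {F : EuclideanSpace ℝ ι → E} (hF : MemLp F 2 P) (r : ℝ) :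
    CVaR ε P (fun w => ‖c + F w‖ ^ 2 - r ^ 2)
      ≤ (‖c‖ + √(ε⁻¹ * ∫ w, ‖F w‖ ^ 2 ∂P)) ^ 2 - r ^ 2 := by
  have hF2 : Integrable (fun w => ‖F w‖ ^ 2) P :=
    (memLp_two_iff_integrable_sq_norm hF.1).mp hF
  have hcF : MemLp (fun w => c + F w) 2 P := (memLp_const c).add hF
  have hL : Integrable (fun w => ‖c + F w‖ ^ 2 - r ^ 2) P :=
    ((memLp_two_iff_integrable_sq_norm hcF.1).mp hcF).sub (integrable_const _)
  set g := ‖c‖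
  set T := ∫ w, ‖F w‖ ^ 2 ∂P
  set W := √(ε⁻¹ * T)
  have hW : W ^ 2 = ε⁻¹ * T :=
    Real.sq_sqrt (mul_nonneg (inv_nonneg.mpr hε.1.le) (integral_nonneg fun _ => by positivity))
  refine le_of_forall_pos_le_add fun η hη => ?_
  -- threshold `β = g² + a - r²`; `a = gW` would be optimal in `norm_add_sq_le` but may vanish
  have ha : 0 < g * W + η := by positivity
  set a := g * W + η
  have hpoint : ∀ w, max (‖c + F w‖ ^ 2 - r ^ 2 - (g ^ 2 + a - r ^ 2)) 0
      ≤ (1 + g ^ 2 / a) * ‖F w‖ ^ 2 := fun w =>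
    max_le (by linarith [norm_add_sq_le c (F w) ha]) (by positivity)
  have hint : ∫ w, max (‖c + F w‖ ^ 2 - r ^ 2 - (g ^ 2 + a - r ^ 2)) 0 ∂P
      ≤ (1 + g ^ 2 / a) * T := by
    rw [← integral_const_mul]
    exact integral_mono (hL.sub (integrable_const _)).pos_part (hF2.const_mul _) hpoint
  have hfrac : g ^ 2 / a * W ^ 2 ≤ g * W := by
    rw [div_mul_eq_mul_div, div_le_iff₀ ha]
    nlinarith [mul_nonneg (mul_nonneg (norm_nonneg c) (Real.sqrt_nonneg (ε⁻¹ * T))) hη.le]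
  calc CVaR ε P (fun w => ‖c + F w‖ ^ 2 - r ^ 2)
      ≤ g ^ 2 + a - r ^ 2 + ε⁻¹ * ((1 + g ^ 2 / a) * T) :=
        (CVaR_le hε hL _).trans (by gcongr; exact inv_nonneg.mpr hε.1.le)
    _ = g ^ 2 + a - r ^ 2 + W ^ 2 + g ^ 2 / a * W ^ 2 := by rw [hW]; ring
    _ ≤ (g + W) ^ 2 - r ^ 2 + η := by linarith

end CVaR

theorem trace_mul_one_kronecker_mul_transpose {l m n : Type*} [Fintype l] [Fintype m]
    [Fintype n] [DecidableEq l] (H : Matrix m (l × n) ℝ) (S : Matrix n n ℝ) :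
    trace (H * ((1 : Matrix l l ℝ) ⊗ₖ S) * Hᵀ)
      = ∑ a, trace (H.submatrix id (Prod.mk a) * S * (H.submatrix id (Prod.mk a))ᵀ) := by
  simp only [trace, diag, mul_apply, transpose_apply, submatrix_apply, id, kroneckerMap_apply,
    one_apply, Fintype.sum_prod_type, Finset.sum_mul]
  rw [Finset.sum_comm]
  refine Finset.sum_congr rfl fun i _ => ?_
  simp [ite_mul]

theorem norm_pow_add_sum_pow_mul_le {n m : Type*} [Fintype n] [Fintype m] [DecidableEq n]
    [DecidableEq m] (A : Matrix n n ℝ) (D : Matrix n m ℝ) (x : EuclideanSpace ℝ n) (k : ℕ)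
    {v : ℕ → EuclideanSpace ℝ m} {d : ℝ} (hv : ∀ τ, ‖v τ‖ ≤ d) :
    ‖toEuclideanLin (A ^ k) x + ∑ j ∈ Finset.range k, toEuclideanLin (A ^ j * D) (v (k - 1 - j))‖
      ≤ specNorm A ^ k * ‖x‖ + (∑ j ∈ Finset.range k, specNorm A ^ j) * (specNorm D * d) := by
  have hpow : ∀ j, specNorm (A ^ j) ≤ specNorm A ^ j := specNorm_pow_le A
  refine (norm_add_le _ _).trans (add_le_add ?_ ((norm_sum_le _ _).trans ?_))
  · exact (norm_toEuclideanLin_le _ x).trans (by gcongr; exact hpow k)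
  · rw [Finset.sum_mul]
    refine Finset.sum_le_sum fun j _ => (norm_toEuclideanLin_le _ _).trans ?_
    have hAD : specNorm (A ^ j * D) ≤ specNorm A ^ j * specNorm D :=
      (specNorm_mul_le _ _).trans (by gcongr; exacts [specNorm_nonneg D, hpow j])
    exact (mul_le_mul hAD (hv _) (norm_nonneg _)
      (mul_nonneg (pow_nonneg (specNorm_nonneg A) j) (specNorm_nonneg D))).trans_eq (mul_assoc ..)

theorem trace_Hmat_mul_kronecker_le {nx nw : ℕ} (A : Matrix (Fin nx) (Fin nx) ℝ)
    (E : Matrix (Fin nx) (Fin nw) ℝ) {Sw : Matrix (Fin nw) (Fin nw) ℝ} (hSw : Sw.PosSemidef)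
    (k : ℕ) :
    trace (Hmat A E k * ((1 : Matrix (Fin k) (Fin k) ℝ) ⊗ₖ Sw) * (Hmat A E k)ᵀ)
      ≤ (∑ j ∈ Finset.range k, specNorm A ^ j) ^ 2 * trace (Sw * Eᵀ * E) := by
  have hτ : trace (E * Sw * Eᵀ) = trace (Sw * Eᵀ * E) := (trace_mul_cycle Sw Eᵀ E).symm
  have hESE : (E * Sw * Eᵀ).PosSemidef := hSw.mul_mul_conjTranspose_same E
  rw [trace_mul_one_kronecker_mul_transpose, ← hτ]
  calc ∑ a : Fin k, trace ((A ^ (k - 1 - a) * E) * Sw * (A ^ (k - 1 - a) * E)ᵀ)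
      = ∑ a : Fin k, trace (A ^ (k - 1 - a) * (E * Sw * Eᵀ) * (A ^ (k - 1 - a))ᵀ) := by
        simp only [transpose_mul, Matrix.mul_assoc]
    _ ≤ ∑ a : Fin k, (specNorm A ^ (k - 1 - a)) ^ 2 * trace (E * Sw * Eᵀ) := by
        gcongr with a
        refine (trace_mul_mul_transpose_le _ hESE).trans ?_
        gcongr
        · exact hESE.trace_nonneg
        · exact specNorm_nonneg _
        · exact specNorm_pow_le A _
    _ = (∑ j ∈ Finset.range k, (specNorm A ^ j) ^ 2) * trace (E * Sw * Eᵀ) := by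
        rw [← Finset.sum_mul, Fin.sum_univ_eq_sum_range (fun j => (specNorm A ^ (k - 1 - j)) ^ 2),
          Finset.sum_range_reflect (fun j => (specNorm A ^ j) ^ 2)]
    _ ≤ (∑ j ∈ Finset.range k, specNorm A ^ j) ^ 2 * trace (E * Sw * Eᵀ) := by
        gcongr
        · exact hESE.trace_nonneg
        · exact Finset.sum_sq_le_sq_sum_of_nonneg fun j _ => pow_nonneg (specNorm_nonneg A) j

theorem stmt16_general {nx nv nw : ℕ} (ε : ℝ) (hε : ε ∈ Set.Ioo (0 : ℝ) 1)
    (A : Matrix (Fin nx) (Fin nx) ℝ) (D : Matrix (Fin nx) (Fin nv) ℝ)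
    (E : Matrix (Fin nx) (Fin nw) ℝ) (Sw : Matrix (Fin nw) (Fin nw) ℝ)
    (hA : specNorm A < 1) (hSw : Sw.PosSemidef)
    (d : ℝ) (r : ℝ)
    (hr2 : ((1 - specNorm A) ^ 2)⁻¹ *
      (specNorm D * d + Real.sqrt (ε⁻¹ * Matrix.trace (Sw * Eᵀ * E))) ^ 2 ≤ r ^ 2) :
    ∀ x : EuclideanSpace ℝ (Fin nx), ‖x‖ ^ 2 ≤ r ^ 2 → ∀ k : ℕ, 1 ≤ k →
      ∀ v : ℕ → EuclideanSpace ℝ (Fin nv), (∀ τ, ‖v τ‖ ≤ d) →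
      wcCVaR ε ((1 : Matrix (Fin k) (Fin k) ℝ) ⊗ₖ Sw)
        (fun w => ‖Matrix.toEuclideanLin (A ^ k) x +
          (∑ j ∈ Finset.range k, Matrix.toEuclideanLin (A ^ j * D) (v (k - 1 - j))) +
          Matrix.toEuclideanLin (Hmat A E k) w‖ ^ 2 - r ^ 2) ≤ 0 := by
  intro x hx k _ v hv
  set ρ := specNorm A
  set S := ∑ j ∈ Finset.range k, ρ ^ j
  set W := √(ε⁻¹ * trace (Sw * Eᵀ * E))
  have hρ : 0 < 1 - ρ := sub_pos.mpr hA
  have hS : 0 ≤ S := Finset.sum_nonneg fun j _ => pow_nonneg (specNorm_nonneg A) j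
  have hxr : ‖x‖ ≤ |r| := by simpa using sq_le_sq.mp hx
  have hinput : specNorm D * d + W ≤ (1 - ρ) * |r| := by
    rw [inv_mul_le_iff₀ (by positivity), ← mul_pow, sq_le_sq, abs_mul, abs_of_pos hρ] at hr2
    exact (le_abs_self _).trans hr2
  refine Real.iSup_le (fun ⟨P, hP⟩ => ?_) le_rfl
  have := hP.1
  refine (CVaR_norm_add_sq_sub_sq_le ⟨hε.1, hε.2.le⟩ _
    (MomentSet.memLp_toEuclideanLin hP _) r).trans ?_
  rw [MomentSet.integral_norm_toEuclideanLin_sq hP, sub_nonpos, ← sq_abs r]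
  have hnoise : √(ε⁻¹ * trace (Hmat A E k * ((1 : Matrix (Fin k) (Fin k) ℝ) ⊗ₖ Sw)
      * (Hmat A E k)ᵀ)) ≤ S * W := by
    rw [← Real.sqrt_sq hS, ← Real.sqrt_mul (sq_nonneg S), mul_left_comm]
    exact Real.sqrt_le_sqrt (mul_le_mul_of_nonneg_left (trace_Hmat_mul_kronecker_le A E hSw k)
      (inv_nonneg.mpr hε.1.le))
  gcongr
  calc _ ≤ ρ ^ k * ‖x‖ + S * (specNorm D * d) + S * W :=
        add_le_add (norm_pow_add_sum_pow_mul_le A D x k hv) hnoise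
    _ ≤ ρ ^ k * |r| + S * ((1 - ρ) * |r|) := by
        rw [add_assoc, ← mul_add]
        gcongr
        exact pow_nonneg (specNorm_nonneg A) k
    _ = |r| := by rw [← mul_assoc, geom_sum_mul_neg]; ring

/-- Theorem 4: worst-case CVaR robust positively invariant set for
`x_{t+1} = A x_t + D v_t + E w_t` with `‖v_t‖ ≤ d`. -/
theorem stmt16 {nx nv nw : ℕ} (ε : ℝ) (hε : ε ∈ Set.Ioo (0 : ℝ) 1)
    (A : Matrix (Fin nx) (Fin nx) ℝ) (D : Matrix (Fin nx) (Fin nv) ℝ)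
    (E : Matrix (Fin nx) (Fin nw) ℝ) (Sw : Matrix (Fin nw) (Fin nw) ℝ)
    (hA : specNorm A < 1) (hSw : Sw.PosSemidef)
    (d : ℝ) (r : ℝ) (hr : 0 < r)
    (hr2 : ((1 - specNorm A) ^ 2)⁻¹ *
      (specNorm D * d + Real.sqrt (ε⁻¹ * Matrix.trace (Sw * Eᵀ * E))) ^ 2 ≤ r ^ 2) :
    ∀ x : EuclideanSpace ℝ (Fin nx), ‖x‖ ^ 2 ≤ r ^ 2 → ∀ k : ℕ, 1 ≤ k →
      ∀ v : ℕ → EuclideanSpace ℝ (Fin nv), (∀ τ, ‖v τ‖ ≤ d) →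
      wcCVaR ε ((1 : Matrix (Fin k) (Fin k) ℝ) ⊗ₖ Sw)
        (fun w => ‖Matrix.toEuclideanLin (A ^ k) x +
          (∑ j ∈ Finset.range k, Matrix.toEuclideanLin (A ^ j * D) (v (k - 1 - j))) +
          Matrix.toEuclideanLin (Hmat A E k) w‖ ^ 2 - r ^ 2) ≤ 0 :=
  stmt16_general ε hε A D E Sw hA hSw d r hr2
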